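/- Let 0 < λ_min ≤ λ_max < ∞ and κ := λ_max/λ_min. If Σ and Σ′ are d×d real symmetric positive definite matrices all of whose eigenvalues lie in [λ_min, λ_max], then κ^{−1/2} I_d ⪯ T_{Σ→Σ′} ⪯ κ^{1/2} I_d, i.e., every eigenvalue of the transport map T_{Σ→Σ′} lies in the interval [1/√κ, √κ]. -/

import Mathlib

open Matrix
open scoped Classical

/-- Symmetric PSD square root of a positive semidefinite matrix (junk value `0` otherwise). -/
noncomputable def msqrt {d : ℕ} (M : Matrix (Fin d) (Fin d) ℝ) : Matrix (Fin d) (Fin d) ℝ :=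
  if h : M.PosSemidef then h.1.eigenvectorUnitary.1 * diagonal ((↑) ∘ (Real.sqrt ·) ∘ h.1.eigenvalues) *
    (star h.1.eigenvectorUnitary : Matrix (Fin d) (Fin d) ℝ) else 0

/-- Optimal transport map `T_{A→B} = A^{-1/2} (A^{1/2} B A^{1/2})^{1/2} A^{-1/2}`. -/
noncomputable def Tmap {d : ℕ} (A B : Matrix (Fin d) (Fin d) ℝ) : Matrix (Fin d) (Fin d) ℝ :=
  (msqrt A)⁻¹ * msqrt (msqrt A * B * msqrt A) * (msqrt A)⁻¹

/-- Squared Bures–Wasserstein distance `tr(A + B - 2 (A^{1/2} B A^{1/2})^{1/2})`. -/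
noncomputable def W2sq {d : ℕ} (A B : Matrix (Fin d) (Fin d) ℝ) : ℝ :=
  (A + B - (2 : ℝ) • msqrt (msqrt A * B * msqrt A)).trace

/-- Bures–Wasserstein distance. -/
noncomputable def W2 {d : ℕ} (A B : Matrix (Fin d) (Fin d) ℝ) : ℝ :=
  Real.sqrt (W2sq A B)

/-- Smallest eigenvalue of a (hermitian) matrix. -/
noncomputable def lamMin {d : ℕ} (M : Matrix (Fin d) (Fin d) ℝ) : ℝ :=
  if h : M.IsHermitian then ⨅ i, h.eigenvalues i else 0

/-- Largest eigenvalue of a (hermitian) matrix. -/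
noncomputable def lamMax {d : ℕ} (M : Matrix (Fin d) (Fin d) ℝ) : ℝ :=
  if h : M.IsHermitian then ⨆ i, h.eigenvalues i else 0

/-- `Kset a b` : symmetric positive definite matrices with all eigenvalues in `[a, b]`,
expressed via the Loewner order `a • I ⪯ S ⪯ b • I`. -/
def Kset {d : ℕ} (a b : ℝ) : Set (Matrix (Fin d) (Fin d) ℝ) :=
  {S | S.PosDef ∧ (S - a • (1 : Matrix (Fin d) (Fin d) ℝ)).PosSemidef ∧
    (b • (1 : Matrix (Fin d) (Fin d) ℝ) - S).PosSemidef}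

/-- Barycenter functional `F(S) = (1/(2N)) ∑ᵢ W₂²(S, Σᵢ)`. -/
noncomputable def Fbar {d N : ℕ} (Ss : Fin N → Matrix (Fin d) (Fin d) ℝ)
    (S : Matrix (Fin d) (Fin d) ℝ) : ℝ :=
  (1 / (2 * (N : ℝ))) * ∑ i, W2sq S (Ss i)

/-- Bures–Wasserstein gradient of the barycenter functional: `I - (1/N) ∑ᵢ T_{S→Σᵢ}`. -/
noncomputable def gradF {d N : ℕ} (Ss : Fin N → Matrix (Fin d) (Fin d) ℝ)
    (S : Matrix (Fin d) (Fin d) ℝ) : Matrix (Fin d) (Fin d) ℝ :=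
  1 - (N : ℝ)⁻¹ • ∑ i, Tmap S (Ss i)

/-- `‖A‖_S² = tr(A S A)`. -/
noncomputable def normAtSq {d : ℕ} (A S : Matrix (Fin d) (Fin d) ℝ) : ℝ :=
  (A * S * A).trace

/-!
The transport map `T = T_{A→B}` is positive semidefinite and pushes `A` forward to `B`:
`T A T = B`. Conjugating `l ≤ A ≤ u` (Loewner order) by `T` gives `l T² ≤ B ≤ u T²`, and
combining with `l ≤ B ≤ u` yields `l / u ≤ T² ≤ u / l`. Since `T ≥ 0`, its spectrum is the
nonnegative square root of that of `T²`, so `√(l / u) ≤ T ≤ √(u / l)`.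
-/

open scoped MatrixOrder

section LoewnerBounds

variable {R : Type*} [Ring R] [StarRing R] [PartialOrder R] [StarOrderedRing R] [Algebra ℝ R]
  [StarModule ℝ R] {a b t : R} {l u : ℝ}

lemma algebraMap_div_le_sq_of_mul_mul_eq (ht : IsSelfAdjoint t) (h : t * a * t = b) (hu : 0 < u)
    (hau : a ≤ algebraMap ℝ R u) (hlb : algebraMap ℝ R l ≤ b) :
    algebraMap ℝ R (l / u) ≤ t ^ 2 := by
  have hconj : algebraMap ℝ R l ≤ u • t ^ 2 := by
    calc algebraMap ℝ R l ≤ t * a * t := h ▸ hlb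
      _ ≤ t * algebraMap ℝ R u * t := ht.conjugate_le_conjugate hau
      _ = u • t ^ 2 := by rw [Algebra.algebraMap_eq_smul_one, mul_smul_one, smul_mul_assoc, sq]
  calc algebraMap ℝ R (l / u) = u⁻¹ • algebraMap ℝ R l := by
        rw [Algebra.algebraMap_eq_smul_one, Algebra.algebraMap_eq_smul_one, smul_smul,
          div_eq_inv_mul]
    _ ≤ u⁻¹ • u • t ^ 2 := smul_le_smul_of_nonneg_left hconj (inv_nonneg.2 hu.le)
    _ = t ^ 2 := inv_smul_smul₀ hu.ne' _

lemma sq_le_algebraMap_div_of_mul_mul_eq (ht : IsSelfAdjoint t) (h : t * a * t = b) (hl : 0 < l)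
    (hla : algebraMap ℝ R l ≤ a) (hbu : b ≤ algebraMap ℝ R u) :
    t ^ 2 ≤ algebraMap ℝ R (u / l) := by
  have hconj : l • t ^ 2 ≤ algebraMap ℝ R u := by
    calc l • t ^ 2 = t * algebraMap ℝ R l * t := by
          rw [Algebra.algebraMap_eq_smul_one, mul_smul_one, smul_mul_assoc, sq]
      _ ≤ t * a * t := ht.conjugate_le_conjugate hla
      _ ≤ algebraMap ℝ R u := h ▸ hbu
  calc t ^ 2 = l⁻¹ • l • t ^ 2 := (inv_smul_smul₀ hl.ne' _).symm
    _ ≤ l⁻¹ • algebraMap ℝ R u := smul_le_smul_of_nonneg_left hconj (inv_nonneg.2 hl.le)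
    _ = algebraMap ℝ R (u / l) := by
        rw [Algebra.algebraMap_eq_smul_one, Algebra.algebraMap_eq_smul_one, smul_smul,
          div_eq_inv_mul]

end LoewnerBounds

section SquareRoots

variable {A : Type*} [Ring A] [StarRing A] [PartialOrder A] [StarOrderedRing A] [Algebra ℝ A]
  [TopologicalSpace A] [ContinuousFunctionalCalculus ℝ A IsSelfAdjoint]
  [NonnegSpectrumClass ℝ A] {a : A} {c : ℝ}

lemma algebraMap_le_of_algebraMap_sq_le_sq (ha : 0 ≤ a) (hc : 0 ≤ c)
    (h : algebraMap ℝ A (c ^ 2) ≤ a ^ 2) : algebraMap ℝ A c ≤ a := by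
  rw [← cfc_pow_id (R := ℝ) a 2, algebraMap_le_cfc_iff (· ^ 2) (c ^ 2) a] at h
  rw [algebraMap_le_iff_le_spectrum]
  intro x hx
  exact (pow_le_pow_iff_left₀ hc (spectrum_nonneg_of_nonneg ha hx) two_ne_zero).1 (h x hx)

lemma le_algebraMap_of_sq_le_algebraMap_sq (ha : 0 ≤ a) (hc : 0 ≤ c)
    (h : a ^ 2 ≤ algebraMap ℝ A (c ^ 2)) : a ≤ algebraMap ℝ A c := by
  rw [← cfc_pow_id (R := ℝ) a 2, cfc_le_algebraMap_iff (· ^ 2) (c ^ 2) a] at h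
  rw [le_algebraMap_iff_spectrum_le]
  intro x hx
  exact (pow_le_pow_iff_left₀ (spectrum_nonneg_of_nonneg ha hx) hc two_ne_zero).1 (h x hx)

theorem inv_sqrt_le_and_le_sqrt_of_mul_mul_eq [StarModule ℝ A] {a b t : A} (ht : 0 ≤ t)
    (h : t * a * t = b) {l u : ℝ} (hl : 0 < l) (hlu : l ≤ u) (hla : algebraMap ℝ A l ≤ a)
    (hau : a ≤ algebraMap ℝ A u) (hlb : algebraMap ℝ A l ≤ b) (hbu : b ≤ algebraMap ℝ A u) :
    algebraMap ℝ A (√(u / l))⁻¹ ≤ t ∧ t ≤ algebraMap ℝ A √(u / l) := by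
  have ht' := IsSelfAdjoint.of_nonneg ht
  have hu := hl.trans_le hlu
  constructor
  · apply algebraMap_le_of_algebraMap_sq_le_sq ht (by positivity)
    rw [inv_pow, Real.sq_sqrt (by positivity), inv_div]
    exact algebraMap_div_le_sq_of_mul_mul_eq ht' h hu hau hlb
  · apply le_algebraMap_of_sq_le_algebraMap_sq ht (Real.sqrt_nonneg _)
    rw [Real.sq_sqrt (by positivity)]
    exact sq_le_algebraMap_div_of_mul_mul_eq ht' h hl hla hbu

end SquareRoots

section TransportMap

variable {d : ℕ}

-- Unconditional thanks to the junk value `msqrt M = 0` off the positive semidefinite cone.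
lemma posSemidef_msqrt (M : Matrix (Fin d) (Fin d) ℝ) : (msqrt M).PosSemidef := by
  rw [msqrt]
  split_ifs
  · rw [star_eq_conjTranspose]
    exact (PosSemidef.diagonal fun i => Real.sqrt_nonneg _).mul_mul_conjTranspose_same _
  · exact PosSemidef.zero

lemma msqrt_mul_self {M : Matrix (Fin d) (Fin d) ℝ} (h : M.PosSemidef) :
    msqrt M * msqrt M = M := by
  have hsp := h.1.spectral_theorem
  simp only [Unitary.conjStarAlgAut_apply] at hsp
  have hUU := Unitary.coe_star_mul_self h.1.eigenvectorUnitary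
  rw [msqrt, dif_pos h]
  conv_rhs => rw [hsp]
  simp only [Matrix.mul_assoc]
  rw [← Matrix.mul_assoc (star _) (h.1.eigenvectorUnitary : Matrix (Fin d) (Fin d) ℝ), hUU,
    Matrix.one_mul, ← Matrix.mul_assoc (diagonal _) (diagonal _), diagonal_mul_diagonal]
  congr 3
  funext i
  simp [Real.mul_self_sqrt (h.eigenvalues_nonneg i)]

lemma isUnit_det_msqrt {M : Matrix (Fin d) (Fin d) ℝ} (h : M.PosDef) : IsUnit (msqrt M).det := by
  have hdet : (msqrt M).det * (msqrt M).det ≠ 0 := by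
    rw [← det_mul, msqrt_mul_self h.posSemidef]
    exact h.det_pos.ne'
  exact (left_ne_zero_of_mul hdet).isUnit

lemma posSemidef_Tmap (A B : Matrix (Fin d) (Fin d) ℝ) : (Tmap A B).PosSemidef := by
  have hinv : ((msqrt A)⁻¹)ᴴ = (msqrt A)⁻¹ := by
    rw [conjTranspose_nonsing_inv, (posSemidef_msqrt A).1.eq]
  rw [Tmap]
  simpa only [hinv] using (posSemidef_msqrt _).mul_mul_conjTranspose_same (msqrt A)⁻¹

lemma Tmap_mul_mul_Tmap {A B : Matrix (Fin d) (Fin d) ℝ} (hA : A.PosDef) (hB : B.PosSemidef) :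
    Tmap A B * A * Tmap A B = B := by
  have hsBs : (msqrt A * B * msqrt A).PosSemidef := by
    simpa only [(posSemidef_msqrt A).1.eq] using hB.mul_mul_conjTranspose_same (msqrt A)
  have hS := msqrt_mul_self hsBs
  have hs := isUnit_det_msqrt hA
  have hsA := msqrt_mul_self hA.posSemidef
  rw [Tmap]
  generalize msqrt (msqrt A * B * msqrt A) = S at hS ⊢
  generalize msqrt A = s at hS hs hsA ⊢
  subst hsA
  calc s⁻¹ * S * s⁻¹ * (s * s) * (s⁻¹ * S * s⁻¹) = s⁻¹ * (S * S) * s⁻¹ := by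
        simp only [Matrix.mul_assoc, nonsing_inv_mul_cancel_left _ _ hs,
          mul_nonsing_inv_cancel_left _ _ hs]
    _ = B := by
        simp only [hS, Matrix.mul_assoc, nonsing_inv_mul_cancel_left _ _ hs, mul_nonsing_inv _ hs,
          Matrix.mul_one]

end TransportMap

/-- Eigenvalues of the optimal transport map between matrices conditioned in
`[l, u]` lie in `[1/√κ, √κ]` for `κ = u / l`. -/
theorem transport_map_eigenvalue_bounds {d : ℕ} (l u : ℝ) (hl : 0 < l) (hlu : l ≤ u)
    (A B : Matrix (Fin d) (Fin d) ℝ) (hA : A ∈ Kset l u) (hB : B ∈ Kset l u) :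
    (Tmap A B - (Real.sqrt (u / l))⁻¹ • (1 : Matrix (Fin d) (Fin d) ℝ)).PosSemidef ∧
    (Real.sqrt (u / l) • (1 : Matrix (Fin d) (Fin d) ℝ) - Tmap A B).PosSemidef := by
  obtain ⟨hApd, hAl, hAu⟩ := hA
  obtain ⟨hBpd, hBl, hBu⟩ := hB
  simp only [← Matrix.le_iff, ← Algebra.algebraMap_eq_smul_one] at hAl hAu hBl hBu ⊢
  exact inv_sqrt_le_and_le_sqrt_of_mul_mul_eq (nonneg_iff_posSemidef.2 (posSemidef_Tmap A B))
    (Tmap_mul_mul_Tmap hApd hBpd.posSemidef) hl hlu hAl hAu hBl hBu
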